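/- γ₂(Tₙ) ≤ ⌊log₂ n⌋ + 1, where Tₙ is the n×n lower triangular all-ones matrix. -/

import Mathlib

open Matrix Real

/-- `‖B‖_{2→∞}`: the largest Euclidean norm of a row of `B`. -/
noncomputable def rowNorm {m n : Type*} [Fintype m] [Fintype n] (B : Matrix m n ℝ) : ℝ :=
  ⨆ i, Real.sqrt (∑ j, B i j ^ 2)

/-- `‖C‖_{1→2}`: the largest Euclidean norm of a column of `C`. -/
noncomputable def colNorm {m n : Type*} [Fintype m] [Fintype n] (C : Matrix m n ℝ) : ℝ :=
  ⨆ j, Real.sqrt (∑ i, C i j ^ 2)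

/-- The `γ₂` factorization norm of a real matrix. -/
noncomputable def gamma2 {m n : Type*} [Fintype m] [Fintype n] (A : Matrix m n ℝ) : ℝ :=
  sInf {t | ∃ (k : ℕ) (B : Matrix m (Fin k) ℝ) (C : Matrix (Fin k) n ℝ),
    A = B * C ∧ t = rowNorm B * colNorm C}

/-- `Tₙ`: the n×n lower triangular all-ones matrix. -/
def T (n : ℕ) : Matrix (Fin n) (Fin n) ℝ :=
  Matrix.of fun i j => if j ≤ i then 1 else 0

/-! For `j ≤ i`, write `a = i + 1 > j`; there is a unique level `l` at which `j` and `a` fall in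
the same dyadic interval of length `2 ^ (l + 1)`, `j` in its lower and `a` in its upper half.
So `Tₙ` is the sum over the `⌊log₂ n⌋ + 1` levels of block matrices whose blocks are all-ones
rectangles, disjoint within a level. Stacking the rank-one factorizations of all the blocks gives
`Tₙ = B C` in which every row of `B` and every column of `C` is a 0/1 vector with at most one
nonzero entry per level, so `‖B‖_{2→∞} ‖C‖_{1→2} ≤ ⌊log₂ n⌋ + 1`. -/

open Finset

section Gamma2

variable {m n κ : Type*} [Fintype m] [Fintype n] [Fintype κ]

lemma rowNorm_le_sqrt {B : Matrix m κ ℝ} {r : ℝ} (h : ∀ i, ∑ q, B i q ^ 2 ≤ r) :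
    rowNorm B ≤ √r :=
  Real.iSup_le (fun i => Real.sqrt_le_sqrt (h i)) (Real.sqrt_nonneg r)

lemma colNorm_le_sqrt {C : Matrix κ n ℝ} {r : ℝ} (h : ∀ j, ∑ q, C q j ^ 2 ≤ r) :
    colNorm C ≤ √r :=
  rowNorm_le_sqrt (B := Cᵀ) h

lemma rowNorm_nonneg (B : Matrix m κ ℝ) : 0 ≤ rowNorm B :=
  Real.iSup_nonneg fun _ => Real.sqrt_nonneg _

lemma colNorm_nonneg (C : Matrix κ n ℝ) : 0 ≤ colNorm C :=
  rowNorm_nonneg Cᵀ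

lemma rowNorm_submatrix_equiv (B : Matrix m κ ℝ) {κ' : Type*} [Fintype κ'] (e : κ' ≃ κ) :
    rowNorm (B.submatrix id e) = rowNorm B := by
  simp only [rowNorm, submatrix_apply, id]
  congr! 3 with i
  exact e.sum_comp (fun q => B i q ^ 2)

lemma colNorm_submatrix_equiv (C : Matrix κ n ℝ) {κ' : Type*} [Fintype κ'] (e : κ' ≃ κ) :
    colNorm (C.submatrix e id) = colNorm C :=
  rowNorm_submatrix_equiv Cᵀ e

lemma gamma2_le_rowNorm_mul_colNorm {A : Matrix m n ℝ} (B : Matrix m κ ℝ) (C : Matrix κ n ℝ)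
    (h : A = B * C) : gamma2 A ≤ rowNorm B * colNorm C := by
  set e := (Fintype.equivFin κ).symm
  refine csInf_le ⟨0, ?_⟩ ⟨_, B.submatrix id e, C.submatrix e id, ?_, ?_⟩
  · rintro t ⟨k, B', C', -, rfl⟩
    exact mul_nonneg (rowNorm_nonneg B') (colNorm_nonneg C')
  · rw [submatrix_mul_equiv, h]
    rfl
  · rw [rowNorm_submatrix_equiv, colNorm_submatrix_equiv]

lemma gamma2_le_of_eq_mul {A : Matrix m n ℝ} {B : Matrix m κ ℝ} {C : Matrix κ n ℝ} {r : ℝ}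
    (h : A = B * C) (hB : ∀ i, ∑ q, B i q ^ 2 ≤ r) (hC : ∀ j, ∑ q, C q j ^ 2 ≤ r)
    (hr : 0 ≤ r) : gamma2 A ≤ r :=
  calc gamma2 A ≤ rowNorm B * colNorm C := gamma2_le_rowNorm_mul_colNorm B C h
    _ ≤ √r * √r :=
      mul_le_mul (rowNorm_le_sqrt hB) (colNorm_le_sqrt hC) (colNorm_nonneg C) (Real.sqrt_nonneg r)
    _ = r := Real.mul_self_sqrt hr

end Gamma2

lemma boole_div_two_eq_and_lt_eq_sub (x y : ℕ) :
    (if y / 2 = x / 2 ∧ y < x then (1 : ℝ) else 0)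
      = (if y < x then 1 else 0) - (if y / 2 < x / 2 then 1 else 0) := by
  split_ifs <;> first | omega | norm_num

lemma div_two_pow_succ (x l : ℕ) : x / 2 ^ (l + 1) = x / 2 ^ l / 2 := by
  rw [pow_succ, Nat.div_div_eq_div_mul]

/-- `j < a` exactly when, at a unique level `l`, both lie in one dyadic interval of length
`2 ^ (l + 1)` with `j` in its lower and `a` in its upper half; the sum over `l` telescopes. -/
lemma sum_range_boole_same_dyadic_block {a j L : ℕ} (ha : a < 2 ^ L) :
    ∑ l ∈ range L,
        (if j / 2 ^ (l + 1) = a / 2 ^ (l + 1) ∧ j / 2 ^ l < a / 2 ^ l then (1 : ℝ) else 0)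
      = if j < a then 1 else 0 := by
  set g : ℕ → ℝ := fun l => if j / 2 ^ l < a / 2 ^ l then 1 else 0
  have hterm : ∀ l, (if j / 2 ^ (l + 1) = a / 2 ^ (l + 1) ∧ j / 2 ^ l < a / 2 ^ l then (1 : ℝ)
      else 0) = g l - g (l + 1) := fun l => by
    simp only [g, div_two_pow_succ]
    exact boole_div_two_eq_and_lt_eq_sub _ _
  rw [sum_congr rfl fun l _ => hterm l, sum_range_sub']
  simp [g, Nat.div_eq_of_lt ha]

lemma sum_boole_le_one_of_injective {ι : Type*} [Fintype ι] {f : ι → ℕ}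
    (hf : Function.Injective f) (x : ℕ) : ∑ p, (if x = f p then (1 : ℝ) else 0) ≤ 1 := by
  rw [sum_boole]
  exact_mod_cast card_le_one.2 fun a ha b hb => hf <| by
    rw [mem_filter] at ha hb
    exact ha.2.symm.trans hb.2

lemma sum_fin_boole_mul_boole {N x y : ℕ} (hy : y / 2 < N) :
    ∑ p : Fin N, (if x = 2 * (p : ℕ) + 1 then (1 : ℝ) else 0) * (if y = 2 * (p : ℕ) then 1 else 0)
      = if y / 2 = x / 2 ∧ y < x then 1 else 0 := by
  rw [sum_eq_single ⟨y / 2, hy⟩]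
  · dsimp only
    split_ifs <;> first | omega | norm_num
  · intro p _ hp
    have : y ≠ 2 * (p : ℕ) := fun h => hp (Fin.ext (show (p : ℕ) = y / 2 by omega))
    simp [this]
  · simp

/-- Column `(l, p)` of `dyadicLeft` and row `(l, p)` of `dyadicRight` are the indicators of the
rows `i` with `i + 1` in the upper half and of the columns `j` in the lower half of the `p`-th
dyadic interval of length `2 ^ (l + 1)`. -/
def dyadicLeft (n L : ℕ) : Matrix (Fin n) (Fin L × Fin n) ℝ :=
  of fun i q => if ((i : ℕ) + 1) / 2 ^ (q.1 : ℕ) = 2 * (q.2 : ℕ) + 1 then 1 else 0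

def dyadicRight (n L : ℕ) : Matrix (Fin L × Fin n) (Fin n) ℝ :=
  of fun q j => if (j : ℕ) / 2 ^ (q.1 : ℕ) = 2 * (q.2 : ℕ) then 1 else 0

lemma dyadicLeft_mul_dyadicRight {n L : ℕ} (h : n < 2 ^ L) :
    dyadicLeft n L * dyadicRight n L = T n := by
  ext i j
  calc (dyadicLeft n L * dyadicRight n L) i j
      = ∑ l : Fin L, ∑ p : Fin n,
          (if ((i : ℕ) + 1) / 2 ^ (l : ℕ) = 2 * (p : ℕ) + 1 then (1 : ℝ) else 0) *
            (if (j : ℕ) / 2 ^ (l : ℕ) = 2 * (p : ℕ) then 1 else 0) := by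
        simp [mul_apply, Fintype.sum_prod_type, dyadicLeft, dyadicRight]
    _ = ∑ l ∈ range L, (if (j : ℕ) / 2 ^ (l + 1) = ((i : ℕ) + 1) / 2 ^ (l + 1) ∧
          (j : ℕ) / 2 ^ l < ((i : ℕ) + 1) / 2 ^ l then (1 : ℝ) else 0) := by
        rw [← Fin.sum_univ_eq_sum_range]
        refine sum_congr rfl fun l _ => ?_
        simp only [div_two_pow_succ]
        exact sum_fin_boole_mul_boole
          ((Nat.div_le_self _ _).trans_lt ((Nat.div_le_self _ _).trans_lt j.isLt))
    _ = T n i j := by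
        rw [sum_range_boole_same_dyadic_block (by omega), T, of_apply]
        simp only [Nat.lt_succ_iff, Fin.le_def]

lemma sum_sq_dyadicLeft_le (n L : ℕ) (i : Fin n) : ∑ q, dyadicLeft n L i q ^ 2 ≤ L :=
  calc ∑ q, dyadicLeft n L i q ^ 2
      = ∑ l : Fin L, ∑ p : Fin n,
          (if ((i : ℕ) + 1) / 2 ^ (l : ℕ) = 2 * (p : ℕ) + 1 then (1 : ℝ) else 0) := by
        simp only [dyadicLeft, of_apply, ite_pow, one_pow, ne_eq, two_ne_zero, not_false_eq_true,
          zero_pow, Fintype.sum_prod_type]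
    _ ≤ ∑ _l : Fin L, 1 :=
        sum_le_sum fun l _ => sum_boole_le_one_of_injective (fun a b h => by ext; omega) _
    _ = L := by simp

lemma sum_sq_dyadicRight_le (n L : ℕ) (j : Fin n) : ∑ q, dyadicRight n L q j ^ 2 ≤ L :=
  calc ∑ q, dyadicRight n L q j ^ 2
      = ∑ l : Fin L, ∑ p : Fin n,
          (if (j : ℕ) / 2 ^ (l : ℕ) = 2 * (p : ℕ) then (1 : ℝ) else 0) := by
        simp only [dyadicRight, of_apply, ite_pow, one_pow, ne_eq, two_ne_zero, not_false_eq_true,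
          zero_pow, Fintype.sum_prod_type]
    _ ≤ ∑ _l : Fin L, 1 :=
        sum_le_sum fun l _ => sum_boole_le_one_of_injective (fun a b h => by ext; omega) _
    _ = L := by simp

theorem gamma2_T_le_general (n : ℕ) :
    gamma2 (T n) ≤ (Nat.log 2 n : ℝ) + 1 := by
  have hlog : n < 2 ^ (Nat.log 2 n + 1) := Nat.lt_pow_succ_log_self one_lt_two n
  exact_mod_cast gamma2_le_of_eq_mul (dyadicLeft_mul_dyadicRight hlog).symm
    (sum_sq_dyadicLeft_le _ _) (sum_sq_dyadicRight_le _ _) (by positivity)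

/-- `γ₂(Tₙ) ≤ ⌊log₂ n⌋ + 1`. -/
theorem gamma2_T_le (n : ℕ) (hn : 1 ≤ n) :
    gamma2 (T n) ≤ (Nat.log 2 n : ℝ) + 1 :=
  gamma2_T_le_general n
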